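/- arXiv:2111.10998 — 3 statements merged into one kernel-verified Lean document; each statement's English description precedes it below -/
import Mathlib

section
/- For every nonnegative integer m and positive integer n, ∫₀¹ x^{n-1} log^m(1-x) dx = (-1)^m · m! · ζₙ⋆(1_m)/n, where ζₙ⋆(1_m) = ∑_{n ≥ n₁ ≥ ⋯ ≥ n_m ≥ 1} 1/(n₁⋯n_m) is the multiple harmonic star sum with m ones. -/
open Finset

/-- Multiple harmonic star sum with `r` ones: `ζₙ⋆(1_r) = ∑_{n ≥ n₁ ≥ ⋯ ≥ n_r ≥ 1} 1/(n₁⋯n_r)`. -/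
noncomputable def zetastar1 : ℕ → ℕ → ℝ
  | 0, _ => 1
  | (r+1), n => ∑ j ∈ Finset.Icc 1 n, (1 / (j : ℝ)) * zetastar1 r j

/-!
Write `I_m(n) = ∫₀¹ x^{n-1} log^m(1-x) dx`. Integrating by parts against the antiderivative
`x^n - 1` of `n x^{n-1}`, whose zero at `x = 1` tames the singularity of `log(1-x)`, and using
`(1 - x^n)/(1 - x) = ∑_{j<n} x^j` gives `n I_{m+1}(n) = -(m+1) ∑_{j=1}^n I_m(j)`.
Up to the factor `(-1)^m m!` this is the recursion
`ζₙ⋆(1_{m+1}) = ∑_{j=1}^n ζⱼ⋆(1_m)/j`, and `I_0(n) = 1/n` starts the induction.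
-/

open MeasureTheory intervalIntegral Real Set Filter Topology
open scoped Nat

theorem abs_log_pow_le_rpow_neg_half {x : ℝ} (hx₀ : 0 < x) (hx₁ : x ≤ 1) (m : ℕ) :
    |log x| ^ m ≤ m ! * 2 ^ m * x ^ (-(1 / 2) : ℝ) := by
  have hlog : |log x| = -log x := abs_of_nonpos (log_nonpos hx₀.le hx₁)
  have hrpow : x ^ (-(1 / 2) : ℝ) = exp (-log x / 2) := by
    rw [rpow_def_of_pos hx₀]; ring_nf
  -- `y ^ m / m! ≤ exp y` at `y = -log x / 2`
  have h := pow_div_factorial_le_exp (x := -log x / 2) (by linarith [log_nonpos hx₀.le hx₁]) m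
  rw [div_pow, div_div, div_le_iff₀ (by positivity)] at h
  rw [hlog, hrpow]
  linarith

theorem intervalIntegrable_log_pow (m : ℕ) :
    IntervalIntegrable (fun x => log x ^ m) volume 0 1 := by
  have hdom : IntervalIntegrable (fun x : ℝ => m ! * 2 ^ m * x ^ (-(1 / 2) : ℝ)) volume 0 1 :=
    (intervalIntegrable_rpow' (by norm_num)).const_mul _
  rw [intervalIntegrable_iff_integrableOn_Ioc_of_le zero_le_one] at hdom ⊢
  refine hdom.mono' (measurable_log.pow_const m).aestronglyMeasurable ?_
  filter_upwards [ae_restrict_mem measurableSet_Ioc] with x hx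
  rw [norm_pow, norm_eq_abs]
  exact abs_log_pow_le_rpow_neg_half hx.1 hx.2 m

theorem intervalIntegrable_pow_mul_log_one_sub_pow (j m : ℕ) :
    IntervalIntegrable (fun x => x ^ j * log (1 - x) ^ m) volume 0 1 := by
  have h := (intervalIntegrable_log_pow m).comp_sub_left 1
  rw [sub_zero, sub_self] at h
  exact h.symm.continuousOn_mul (continuous_pow j).continuousOn

theorem tendsto_mul_log_pow_nhdsGT_zero (m : ℕ) :
    Tendsto (fun u => u * log u ^ m) (𝓝[>] 0) (𝓝 0) := by
  set r : ℝ := 1 / (m + 1)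
  have hr : 0 < r := by positivity
  have h₁ : Tendsto (fun u : ℝ => u ^ r) (𝓝[>] 0) (𝓝 0) := by
    simpa [zero_rpow hr.ne'] using
      ((continuous_rpow_const hr.le).tendsto 0).mono_left nhdsWithin_le_nhds
  have h := h₁.mul ((tendsto_log_mul_rpow_nhdsGT_zero hr).pow m)
  rw [zero_mul] at h
  refine h.congr' ?_
  filter_upwards [self_mem_nhdsWithin] with u (hu : 0 < u)
  -- `u = u ^ r * (u ^ r) ^ m` since `r * (m + 1) = 1`
  rw [mul_pow, ← rpow_natCast (u ^ r), ← rpow_mul hu.le, mul_left_comm, ← rpow_add hu,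
    show r + r * m = 1 by simp only [r]; field_simp; ring, rpow_one, mul_comm (log u ^ m)]

theorem hasDerivAt_pow_sub_one_mul_log_one_sub_pow {x : ℝ} (hx : x < 1) (n m : ℕ) :
    HasDerivAt (fun x => (x ^ n - 1) * log (1 - x) ^ (m + 1))
      (n * (x ^ (n - 1) * log (1 - x) ^ (m + 1)) +
        (m + 1) * ∑ j ∈ range n, x ^ j * log (1 - x) ^ m) x := by
  have hx' : 1 - x ≠ 0 := sub_ne_zero.2 hx.ne'
  have hlog := (((hasDerivAt_id' x).const_sub 1).log hx').fun_pow (m + 1)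
  refine (((hasDerivAt_pow n x).sub_const 1).mul hlog).congr_deriv ?_
  -- the factor `1 - x` of `1 - x ^ n` cancels the `1 / (1 - x)` from differentiating the logarithm
  have hgeom := geom_sum_mul_neg x n
  rw [← sum_mul]
  field_simp
  push_cast
  linear_combination -(m + 1) * log (1 - x) ^ m * hgeom

theorem tendsto_pow_sub_one_mul_log_one_sub_pow_nhdsLT_one (n m : ℕ) :
    Tendsto (fun x => (x ^ n - 1) * log (1 - x) ^ m) (𝓝[<] 1) (𝓝 0) := by
  have hsub : Tendsto (fun x : ℝ => 1 - x) (𝓝[<] 1) (𝓝[>] 0) := by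
    refine tendsto_nhdsWithin_iff.2
      ⟨?_, eventually_nhdsWithin_of_forall fun x (hx : x < 1) => sub_pos.2 hx⟩
    exact ((continuous_sub_left 1).tendsto' 1 0 (sub_self 1)).mono_left nhdsWithin_le_nhds
  have hgeom : Tendsto (fun x : ℝ => -∑ j ∈ range n, x ^ j) (𝓝[<] 1) (𝓝 (-n)) :=
    ((continuous_finsetSum _ fun j _ => continuous_pow j).neg.tendsto' 1 _
      (by simp)).mono_left nhdsWithin_le_nhds
  have h := hgeom.mul ((tendsto_mul_log_pow_nhdsGT_zero m).comp hsub)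
  rw [mul_zero] at h
  refine h.congr fun x => ?_
  have := geom_sum_mul_neg x n
  simp only [Function.comp_apply]
  linear_combination (-log (1 - x) ^ m) * this

theorem natCast_mul_integral_pow_pred_mul_log_one_sub_pow_succ (n m : ℕ) :
    n * ∫ x in (0 : ℝ)..1, x ^ (n - 1) * log (1 - x) ^ (m + 1) =
      -(m + 1) * ∑ j ∈ range n, ∫ x in (0 : ℝ)..1, x ^ j * log (1 - x) ^ m := by
  have hint (j k : ℕ) := intervalIntegrable_pow_mul_log_one_sub_pow j k
  have hsum :
      IntervalIntegrable (fun x => ∑ j ∈ range n, x ^ j * log (1 - x) ^ m) volume 0 1 := by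
    simpa only [sum_fn] using IntervalIntegrable.sum (range n) fun j _ => hint j m
  have hcont : ContinuousAt (fun x : ℝ => (x ^ n - 1) * log (1 - x) ^ (m + 1)) 0 :=
    ((continuous_pow n).sub continuous_const).continuousAt.mul
      (((continuous_const.sub continuous_id).continuousAt.log (by norm_num)).pow _)
  have hFTC := integral_eq_sub_of_hasDerivAt_of_tendsto zero_lt_one
    (fun x hx => hasDerivAt_pow_sub_one_mul_log_one_sub_pow hx.2 n m)
    (((hint _ _).const_mul _).add (hsum.const_mul _))
    (hcont.tendsto.mono_left nhdsWithin_le_nhds)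
    (tendsto_pow_sub_one_mul_log_one_sub_pow_nhdsLT_one n (m + 1))
  rw [integral_add ((hint _ _).const_mul _) (hsum.const_mul _),
    intervalIntegral.integral_const_mul, intervalIntegral.integral_const_mul,
    integral_finsetSum fun j _ => hint j m, sub_zero, log_one, zero_pow m.succ_ne_zero,
    mul_zero, sub_zero] at hFTC
  linarith

theorem zetastar1_succ (m n : ℕ) :
    zetastar1 (m + 1) n = ∑ j ∈ range n, zetastar1 m (j + 1) / (j + 1) := by
  rw [zetastar1, ← Finset.Ico_add_one_right_eq_Icc, sum_Ico_eq_sum_range, Nat.add_sub_cancel]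
  refine sum_congr rfl fun j _ => ?_
  rw [add_comm 1 j]
  push_cast
  ring

theorem integral_pow_mul_log_pow (m n : ℕ) (hn : 1 ≤ n) :
    ∫ x in (0:ℝ)..1, x ^ (n - 1) * (Real.log (1 - x)) ^ m =
      (-1) ^ m * (m.factorial : ℝ) * zetastar1 m n / n := by
  induction m generalizing n with
  | zero =>
    obtain ⟨k, rfl⟩ : ∃ k, n = k + 1 := ⟨n - 1, by omega⟩
    simp [integral_pow, zetastar1]
  | succ m ih =>
    have hIH (j : ℕ) (_ : j ∈ range n) :
        ∫ x in (0 : ℝ)..1, x ^ j * log (1 - x) ^ m =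
          (-1) ^ m * m ! * zetastar1 m (j + 1) / (j + 1) := by
      simpa using ih (j + 1) j.succ_pos
    rw [eq_div_iff (by positivity), mul_comm,
      natCast_mul_integral_pow_pred_mul_log_one_sub_pow_succ, sum_congr rfl hIH, zetastar1_succ,
      mul_sum, mul_sum]
    refine sum_congr rfl fun j _ => ?_
    push_cast [Nat.factorial_succ]
    ring
end

section
/- ∑_{n≥0} [C(2n,n)/4^n]² · 1/(n+1) = 4/π. -/
/-!
With `c n = C(2n,n) / 4 ^ n` one has `c (n + 1) = c n * (2n+1)/(2n+2)`, so
`4 (N+1) c (N+1) ^ 2 - 4 N c N ^ 2 = c N ^ 2 / (N + 1)` and the `N`-th partial sum telescopes to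
`4 N c N ^ 2`. The `N`-th Wallis product is `((2N+1) c N ^ 2)⁻¹ → π / 2`, hence `4 N c N ^ 2 → 4 / π`.
-/

open Finset Filter Topology Real Nat

lemma centralBinom_div_four_pow_succ (n : ℕ) :
    (centralBinom (n + 1) : ℝ) / 4 ^ (n + 1)
      = centralBinom n / 4 ^ n * ((2 * n + 1) / (2 * n + 2)) := by
  have h : ((n : ℝ) + 1) * centralBinom (n + 1) = 2 * (2 * n + 1) * centralBinom n := by
    exact_mod_cast succ_mul_centralBinom_succ n
  rw [pow_succ]
  field_simp
  linear_combination 2 * h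

lemma sum_range_sq_centralBinom_div_four_pow (N : ℕ) :
    ∑ n ∈ range N, ((centralBinom n : ℝ) / 4 ^ n) ^ 2 * (1 / ((n : ℝ) + 1))
      = 4 * N * ((centralBinom N : ℝ) / 4 ^ N) ^ 2 := by
  induction N with
  | zero => simp
  | succ N ih =>
    rw [sum_range_succ, ih, centralBinom_div_four_pow_succ]
    push_cast
    field_simp
    ring

lemma Real.Wallis.W_eq_inv_sq_centralBinom_div_four_pow (n : ℕ) :
    Real.Wallis.W n = (((centralBinom n : ℝ) / 4 ^ n) ^ 2 * (2 * n + 1))⁻¹ := by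
  induction n with
  | zero => simp [Real.Wallis.W]
  | succ n ih =>
    rw [Real.Wallis.W_succ, ih, centralBinom_div_four_pow_succ]
    push_cast
    field_simp
    ring

lemma tendsto_mul_sq_centralBinom_div_four_pow :
    Tendsto (fun N : ℕ => 4 * N * ((centralBinom N : ℝ) / 4 ^ N) ^ 2) atTop (𝓝 (4 / π)) := by
  have hW : Tendsto (fun N : ℕ => ((centralBinom N : ℝ) / 4 ^ N) ^ 2 * (2 * N + 1)) atTop
      (𝓝 (π / 2)⁻¹) := by
    simpa [Real.Wallis.W_eq_inv_sq_centralBinom_div_four_pow] using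
      Real.Wallis.tendsto_W_nhds_pi_div_two.inv₀ (by positivity)
  have hratio : Tendsto (fun N : ℕ => (N : ℝ) / (N + 1 / 2)) atTop (𝓝 1) :=
    tendsto_natCast_div_add_atTop _
  convert (hratio.mul hW).const_mul 2 using 2
  · field_simp
    ring
  · ring

theorem apery_sq_inv_succ :
    HasSum (fun n : ℕ => ((Nat.choose (2 * n) n : ℝ) / 4 ^ n) ^ 2 * (1 / ((n : ℝ) + 1)))
      (4 / Real.pi) := by
  rw [hasSum_iff_tendsto_nat_of_nonneg (fun n => by positivity)]
  exact tendsto_mul_sq_centralBinom_div_four_pow.congr fun N =>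
    (sum_range_sq_centralBinom_div_four_pow N).symm
end

section
/- ∑_{n≥0} [C(2n,n)/4^n]² · 1/(n+1)² = 16/π - 4. -/
/-!
With `a n = catalan n / 4 ^ n = C(2n,n) / (4 ^ n (n + 1))`, the summand is `a n ^ 2`. Wallis'
integrals give `a n = (4 / π) ∫₀^{π/2} sin^{2n} t cos² t dt`, so
`∑ a n ^ 2 = (4 / π) ∫₀^{π/2} (∑ a n sin^{2n} t) cos² t dt`. The Catalan generating function turns
the inner sum into `2 / (1 + cos t)`, and `∫₀^{π/2} 2 cos² t / (1 + cos t) dt = 4 - π`.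
-/

open Finset Real

noncomputable def centralBinomRatio (n : ℕ) : ℝ := n.centralBinom / 4 ^ n

noncomputable def catalanRatio (n : ℕ) : ℝ := catalan n / 4 ^ n

lemma centralBinomRatio_nonneg (n : ℕ) : 0 ≤ centralBinomRatio n := by
  unfold centralBinomRatio; positivity

lemma catalanRatio_nonneg (n : ℕ) : 0 ≤ catalanRatio n := by
  unfold catalanRatio; positivity

lemma centralBinomRatio_succ (n : ℕ) :
    centralBinomRatio (n + 1) = centralBinomRatio n * (2 * n + 1) / (2 * n + 2) := by
  have h : ((n : ℝ) + 1) * (n + 1).centralBinom = 2 * (2 * n + 1) * n.centralBinom := by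
    exact_mod_cast Nat.succ_mul_centralBinom_succ n
  unfold centralBinomRatio
  field_simp
  linear_combination 2 * (4 : ℝ) ^ n * h

lemma catalanRatio_eq_div (n : ℕ) : catalanRatio n = centralBinomRatio n / (n + 1) := by
  have h : ((n : ℝ) + 1) * catalan n = n.centralBinom := by
    exact_mod_cast succ_mul_catalan_eq_centralBinom n
  unfold catalanRatio centralBinomRatio
  field_simp
  linear_combination h

lemma catalanRatio_eq_two_mul_sub (n : ℕ) :
    catalanRatio n = 2 * (centralBinomRatio n - centralBinomRatio (n + 1)) := by
  rw [catalanRatio_eq_div, centralBinomRatio_succ]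
  field_simp
  ring

lemma sum_range_catalanRatio (N : ℕ) :
    ∑ n ∈ range N, catalanRatio n = 2 - 2 * centralBinomRatio N := by
  induction N with
  | zero => simp [centralBinomRatio]
  | succ N ih => rw [sum_range_succ, ih, catalanRatio_eq_two_mul_sub]; ring

lemma sum_range_catalanRatio_le_two (N : ℕ) : ∑ n ∈ range N, catalanRatio n ≤ 2 := by
  linarith [sum_range_catalanRatio N, centralBinomRatio_nonneg N]

lemma summable_catalanRatio : Summable catalanRatio :=
  summable_of_sum_range_le catalanRatio_nonneg sum_range_catalanRatio_le_two

lemma tsum_catalanRatio_le_two : ∑' n, catalanRatio n ≤ 2 :=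
  Real.tsum_le_of_sum_range_le catalanRatio_nonneg sum_range_catalanRatio_le_two

lemma sum_antidiagonal_catalanRatio (n : ℕ) :
    ∑ ij ∈ antidiagonal n, catalanRatio ij.1 * catalanRatio ij.2 = 4 * catalanRatio (n + 1) := by
  have h : (catalan (n + 1) : ℝ) = ∑ ij ∈ antidiagonal n, (catalan ij.1 * catalan ij.2 : ℝ) := by
    exact_mod_cast catalan_succ' n
  have hpow : ∀ ij ∈ antidiagonal n, (4 : ℝ) ^ ij.1 * 4 ^ ij.2 = 4 ^ n := fun ij hij => by
    rw [← pow_add, mem_antidiagonal.mp hij]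
  unfold catalanRatio
  rw [h, sum_div, mul_sum]
  refine sum_congr rfl fun ij hij => ?_
  rw [div_mul_div_comm, hpow ij hij, pow_succ]
  field_simp

lemma summable_catalanRatio_mul_pow {x : ℝ} (hx₀ : 0 ≤ x) (hx₁ : x ≤ 1) :
    Summable fun n => catalanRatio n * x ^ n :=
  summable_catalanRatio.of_nonneg_of_le
    (fun n => mul_nonneg (catalanRatio_nonneg n) (pow_nonneg hx₀ n))
    (fun n => mul_le_of_le_one_right (catalanRatio_nonneg n) (pow_le_one₀ hx₀ hx₁))

lemma sum_antidiagonal_catalanRatio_mul_pow (x : ℝ) (n : ℕ) :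
    ∑ ij ∈ antidiagonal n, catalanRatio ij.1 * x ^ ij.1 * (catalanRatio ij.2 * x ^ ij.2)
      = 4 * catalanRatio (n + 1) * x ^ n := by
  rw [← sum_antidiagonal_catalanRatio, sum_mul]
  refine sum_congr rfl fun ij hij => ?_
  rw [← mem_antidiagonal.mp hij, pow_add]
  ring

/-- The Catalan convolution makes the sum `g` satisfy `x g² = 4 g - 4`; the bound `g ≤ 2` from
telescoping selects the root `2 / (1 + √(1 - x))`. -/
lemma hasSum_catalanRatio_mul_pow {x : ℝ} (hx₀ : 0 ≤ x) (hx₁ : x ≤ 1) :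
    HasSum (fun n => catalanRatio n * x ^ n) (2 / (1 + √(1 - x))) := by
  have hs := summable_catalanRatio_mul_pow hx₀ hx₁
  set g := ∑' n, catalanRatio n * x ^ n
  have hnorm : Summable fun n => ‖catalanRatio n * x ^ n‖ := by
    simpa only [Real.norm_eq_abs] using hs.abs
  have hsq : g * g = ∑' n, 4 * catalanRatio (n + 1) * x ^ n := by
    rw [tsum_mul_tsum_eq_tsum_sum_antidiagonal_of_summable_norm hnorm hnorm]
    exact tsum_congr (sum_antidiagonal_catalanRatio_mul_pow x)
  have hshift : HasSum (fun n => catalanRatio (n + 1) * x ^ (n + 1)) (g - 1) := by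
    have h := (hasSum_nat_add_iff' 1).mpr hs.hasSum
    rwa [sum_range_one, pow_zero, mul_one, show catalanRatio 0 = 1 by simp [catalanRatio]] at h
  have hquad : x * (g * g) = 4 * g - 4 := by
    rw [hsq, ← tsum_mul_left, show 4 * g - 4 = 4 * (g - 1) by ring, ← hshift.tsum_eq,
      ← tsum_mul_left]
    exact tsum_congr fun n => by ring
  have hg : g ≤ 2 :=
    (hs.tsum_le_tsum (fun n => mul_le_of_le_one_right (catalanRatio_nonneg n)
      (pow_le_one₀ hx₀ hx₁)) summable_catalanRatio).trans tsum_catalanRatio_le_two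
  have hxg : x * g ≤ 2 := by nlinarith
  have hsqrt : √(1 - x) = (2 - x * g) / 2 := by
    rw [show 1 - x = ((2 - x * g) / 2) ^ 2 by linear_combination (-x / 4) * hquad]
    exact Real.sqrt_sq (by linarith)
  convert hs.hasSum using 1
  rw [hsqrt, div_eq_iff (by linarith)]
  linear_combination (1 / 2 : ℝ) * hquad

lemma integral_sin_pow_two_mul (n : ℕ) :
    ∫ t in (0 : ℝ)..π / 2, sin t ^ (2 * n) = π / 2 * centralBinomRatio n := by
  induction n with
  | zero => simp [centralBinomRatio]
  | succ n ih =>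
    rw [mul_add_one, integral_sin_pow, ih, centralBinomRatio_succ]
    simp only [sin_zero, cos_pi_div_two]
    push_cast
    field_simp
    ring

lemma integral_sin_sq_pow_mul_cos_sq (n : ℕ) :
    ∫ t in (0 : ℝ)..π / 2, (sin t ^ 2) ^ n * cos t ^ 2 = π / 4 * catalanRatio n := by
  have h : ∀ t, (sin t ^ 2) ^ n * cos t ^ 2 = sin t ^ (2 * n) - sin t ^ (2 * (n + 1)) := by
    intro t
    rw [cos_sq', ← pow_mul]
    ring
  simp only [h]
  rw [intervalIntegral.integral_sub (by apply Continuous.intervalIntegrable; fun_prop)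
    (by apply Continuous.intervalIntegrable; fun_prop), integral_sin_pow_two_mul,
    integral_sin_pow_two_mul, catalanRatio_eq_two_mul_sub]
  ring

lemma one_add_cos_pos {t : ℝ} (ht : t ∈ Set.Icc 0 (π / 2)) : 0 < 1 + cos t := by
  have := cos_nonneg_of_mem_Icc ⟨by linarith [pi_pos, ht.1], ht.2⟩
  linarith

lemma intervalIntegrable_two_div_one_add_cos_mul_cos_sq :
    IntervalIntegrable (fun t => 2 / (1 + cos t) * cos t ^ 2) MeasureTheory.volume 0 (π / 2) := by
  refine ContinuousOn.intervalIntegrable fun t ht => ?_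
  rw [Set.uIcc_of_le (by positivity)] at ht
  exact ((continuousAt_const.div (continuousAt_const.add continuous_cos.continuousAt)
    (one_add_cos_pos ht).ne').mul (by fun_prop)).continuousWithinAt

/-- `2 (sin u - u + tan (u / 2))` is an antiderivative, by `1 + cos u = 2 cos² (u / 2)`. -/
lemma integral_two_div_one_add_cos_mul_cos_sq :
    ∫ t in (0 : ℝ)..π / 2, 2 / (1 + cos t) * cos t ^ 2 = 4 - π := by
  have hle : (0 : ℝ) ≤ π / 2 := by positivity
  have hderiv : ∀ t ∈ Set.uIcc 0 (π / 2),
      HasDerivAt (fun u => 2 * (sin u - u + tan (u / 2))) (2 / (1 + cos t) * cos t ^ 2) t := by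
    intro t ht
    rw [Set.uIcc_of_le hle] at ht
    have hcos : cos (t / 2) ^ 2 = (1 + cos t) / 2 := by
      rw [cos_sq, mul_div_cancel₀ t two_ne_zero]; ring
    have hcos₀ : cos (t / 2) ≠ 0 := by
      intro h
      have := one_add_cos_pos ht
      nlinarith
    have htan : HasDerivAt (tan ∘ fun u => u / 2) (1 / cos (t / 2) ^ 2 * (1 / 2)) t :=
      (hasDerivAt_tan hcos₀).comp t ((hasDerivAt_id' t).div_const 2)
    refine ((((hasDerivAt_sin t).sub (hasDerivAt_id' t)).add htan).const_mul 2).congr_deriv ?_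
    rw [hcos]
    field_simp [(one_add_cos_pos ht).ne']
    ring
  rw [intervalIntegral.integral_eq_sub_of_hasDerivAt hderiv
    intervalIntegrable_two_div_one_add_cos_mul_cos_sq, show π / 2 / 2 = π / 4 by ring]
  simp only [sin_pi_div_two, tan_pi_div_four, sin_zero, tan_zero, zero_div]
  ring

lemma hasSum_catalanRatio_mul_sin_sq_pow_mul_cos_sq {t : ℝ} (ht : t ∈ Set.Icc 0 (π / 2)) :
    HasSum (fun n => catalanRatio n * ((sin t ^ 2) ^ n * cos t ^ 2))
      (2 / (1 + cos t) * cos t ^ 2) := by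
  have hcos : √(1 - sin t ^ 2) = cos t := by
    rw [← cos_sq', Real.sqrt_sq (cos_nonneg_of_mem_Icc ⟨by linarith [pi_pos, ht.1], ht.2⟩)]
  simp only [← mul_assoc]
  simpa only [hcos] using
    (hasSum_catalanRatio_mul_pow (sq_nonneg _) (sin_sq_le_one t)).mul_right (cos t ^ 2)

lemma hasSum_catalanRatio_sq : HasSum (fun n => catalanRatio n ^ 2) (16 / π - 4) := by
  have hIoc : Set.uIoc (0 : ℝ) (π / 2) ⊆ Set.Icc 0 (π / 2) := by
    rw [Set.uIoc_of_le (by positivity)]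
    exact Set.Ioc_subset_Icc_self
  have hF : ∀ t ∈ Set.uIoc (0 : ℝ) (π / 2), HasSum
      (fun n => catalanRatio n * ((sin t ^ 2) ^ n * cos t ^ 2)) (2 / (1 + cos t) * cos t ^ 2) :=
    fun t ht => hasSum_catalanRatio_mul_sin_sq_pow_mul_cos_sq (hIoc ht)
  have key := intervalIntegral.hasSum_integral_of_dominated_convergence
    (fun n t => catalanRatio n * ((sin t ^ 2) ^ n * cos t ^ 2))
    (fun n => Continuous.aestronglyMeasurable (by fun_prop))
    (fun n => .of_forall fun t _ => (Real.norm_of_nonneg (by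
      have := catalanRatio_nonneg n; positivity)).le)
    (.of_forall fun t ht => (hF t ht).summable)
    ((intervalIntegrable_congr fun t ht => (hF t ht).tsum_eq).mpr
      intervalIntegrable_two_div_one_add_cos_mul_cos_sq)
    (.of_forall hF)
  simp only [intervalIntegral.integral_const_mul, integral_sin_sq_pow_mul_cos_sq,
    integral_two_div_one_add_cos_mul_cos_sq] at key
  rw [show 16 / π - 4 = 4 / π * (4 - π) by field_simp; ring]
  exact (key.mul_left (4 / π)).congr_fun fun n => by field_simp

theorem apery_sq_inv_succ_sq :
    HasSum (fun n : ℕ => ((Nat.choose (2 * n) n : ℝ) / 4 ^ n) ^ 2 * (1 / ((n : ℝ) + 1) ^ 2))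
      (16 / Real.pi - 4) := by
  refine hasSum_catalanRatio_sq.congr_fun fun n => ?_
  rw [catalanRatio_eq_div, centralBinomRatio, Nat.centralBinom]
  field_simp
end
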